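/- Let M ∈ ℕ, p ∈ [1,∞), and let K ⊆ [0,1]^M be a closed convex set. On the interval (0,M), define Π(u) = (∫_{i-1}^{i} u dλ)_{i=1}^M and let D_K be the set of all u ∈ L^p(0,M) such that u has a representative v : (0,M) → ℝ with v(t) ∈ {0,1} for all t, pointwise total variation Var(v;(0,M)) ≤ M, and Π(u) ∈ K. Then D_K is closed in L^p(0,M). -/

import Mathlib

/-!
Since `(0, M)` has finite measure, `L^p` convergence implies `L¹` convergence, so `Π` is
continuous and `Π⁻¹(K)` is closed. For the binary constraint, let `fₙ → u` in `L^p`. A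
subsequence of the `{0, 1}`-valued representatives converges pointwise on a set `S` of full
measure; there `u` is `{0, 1}`-valued and, by lower semicontinuity of the variation,
`Var(u; S) ≤ M`. As `S` is dense, `u|S` extends to all of `(0, M)`: off `S`, take the value `1`
exactly when `u` takes the value `1` on `S` arbitrarily close to the left. Every point of
`(0, M)` is then approximated from the left by a point of `S` carrying the same value, which
turns each monotone sample of the extension into a monotone sample in `S` with the same
increments, so the variation does not grow.
-/

open MeasureTheory Set Filter
open scoped ENNReal

/-- The projection on `L^p(0,M)` given by `Π(u)_i = ∫_{i-1}^i u dλ`. -/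
noncomputable def projK (M : ℕ) (p : ℝ≥0∞)
    (u : Lp ℝ p (volume.restrict (Ioo (0:ℝ) (M:ℝ)))) : Fin M → ℝ :=
  fun i => ∫ t in Ioo ((i:ℕ):ℝ) (((i:ℕ):ℝ)+1), (u : ℝ → ℝ) t
    ∂(volume.restrict (Ioo (0:ℝ) (M:ℝ)))

/-- The set `D_K` of Example 3.5: binary controls on `(0,M)` with pointwise
total variation at most `M` whose vector of interval averages lies in `K`. -/
def DK (M : ℕ) (p : ℝ≥0∞) (K : Set (Fin M → ℝ)) :
    Set (Lp ℝ p (volume.restrict (Ioo (0:ℝ) (M:ℝ)))) :=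
  {u | (∃ v : ℝ → ℝ,
      ((u : ℝ → ℝ) =ᵐ[volume.restrict (Ioo (0:ℝ) (M:ℝ))] v) ∧
      (∀ t ∈ Ioo (0:ℝ) (M:ℝ), v t = 0 ∨ v t = 1) ∧
      eVariationOn v (Ioo (0:ℝ) (M:ℝ)) ≤ (M : ℝ≥0∞)) ∧
    projK M p u ∈ K}

open scoped Topology

section LeftApproximation

variable {S T : Set ℝ} {v w : ℝ → ℝ}

lemma exists_monotone_seq_of_forall_exists_left
    (h : ∀ t ∈ T, ∀ c < t, ∃ s ∈ S, c < s ∧ s ≤ t ∧ v s = w t)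
    {u : ℕ → ℝ} (hu : Monotone u) (huT : ∀ i, u i ∈ T) :
    ∃ σ : ℕ → ℝ, Monotone σ ∧ ∀ i, σ i ∈ S ∧ σ i ≤ u i ∧ v (σ i) = w (u i) := by
  choose g hgS hgc hgt hgv using h
  -- a new point is chosen only when `u` strictly increases, and then in `(u i, u (i + 1)]`
  let σ : ℕ → ℝ := fun n => Nat.rec (g (u 0) (huT 0) (u 0 - 1) (sub_one_lt _))
    (fun i s => if hi : u i < u (i + 1) then g (u (i + 1)) (huT _) (u i) hi else s) n
  have hσ_succ (i : ℕ) : σ (i + 1) =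
      if hi : u i < u (i + 1) then g (u (i + 1)) (huT _) (u i) hi else σ i := rfl
  have hσu (i : ℕ) : σ i ∈ S ∧ σ i ≤ u i ∧ v (σ i) = w (u i) := by
    induction i with
    | zero => exact ⟨hgS _ _ _ _, hgt _ _ _ _, hgv _ _ _ _⟩
    | succ i ih =>
      rw [hσ_succ]
      split_ifs with hi
      · exact ⟨hgS _ _ _ _, hgt _ _ _ _, hgv _ _ _ _⟩
      · have hu_eq : u (i + 1) = u i := le_antisymm (not_lt.1 hi) (hu i.le_succ)
        rw [hu_eq]
        exact ih
  refine ⟨σ, monotone_nat_of_le_succ fun i => ?_, hσu⟩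
  rw [hσ_succ]
  split_ifs with hi
  · exact (hσu i).2.1.trans (hgc _ _ _ hi).le
  · exact le_rfl

theorem eVariationOn_le_of_forall_exists_left
    (h : ∀ t ∈ T, ∀ c < t, ∃ s ∈ S, c < s ∧ s ≤ t ∧ v s = w t) :
    eVariationOn w T ≤ eVariationOn v S := by
  refine iSup_le fun ⟨n, u, hu, huT⟩ => ?_
  obtain ⟨σ, hσ, hσu⟩ := exists_monotone_seq_of_forall_exists_left h hu huT
  calc ∑ i ∈ Finset.range n, edist (w (u (i + 1))) (w (u i))
      = ∑ i ∈ Finset.range n, edist (v (σ (i + 1))) (v (σ i)) := by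
        simp only [(hσu _).2.2]
    _ ≤ eVariationOn v S := eVariationOn.sum_le hσ fun i => (hσu i).1

end LeftApproximation

theorem eVariationOn_le_of_tendsto {ι α E : Type*} [LinearOrder α] [PseudoEMetricSpace E]
    {l : Filter ι} [l.NeBot] {F : ι → α → E} {f : α → E} {s : Set α} {C : ℝ≥0∞}
    (hF : ∀ x ∈ s, Tendsto (fun i => F i x) l (𝓝 (f x)))
    (hC : ∀ᶠ i in l, eVariationOn (F i) s ≤ C) :
    eVariationOn f s ≤ C := by
  refine le_of_not_gt fun hlt => ?_
  obtain ⟨i, hi, hiC⟩ := ((eVariationOn.lowerSemicontinuous_aux hF hlt).and hC).exists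
  exact hi.not_ge hiC

lemma exists_mem_Ioo_of_ae_restrict_mem {a b c t : ℝ} {S : Set ℝ}
    (hS : ∀ᵐ x ∂volume.restrict (Ioo a b), x ∈ S) (ht : t ∈ Ioo a b) (hc : c < t) :
    ∃ s ∈ S, c < s ∧ s < t := by
  set c' := max a c
  have hc't : c' < t := max_lt ht.1 hc
  have : (ae (volume.restrict (Ioo c' t))).NeBot := ae_restrict_neBot.2 (by simp [hc't])
  have hsub : Ioo c' t ⊆ Ioo a b := Ioo_subset_Ioo (le_max_left a c) ht.2.le
  obtain ⟨s, hsS, hs⟩ := ((ae_restrict_of_ae_restrict_of_subset hsub hS).and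
    (ae_restrict_mem measurableSet_Ioo)).exists
  exact ⟨s, hsS, (le_max_right a c).trans_lt hs.1, hs.2⟩

theorem exists_binary_extension_eVariationOn_le {a b : ℝ} {S : Set ℝ} {g : ℝ → ℝ}
    (hS : ∀ᵐ x ∂volume.restrict (Ioo a b), x ∈ S) (hg : ∀ x ∈ S, g x = 0 ∨ g x = 1) :
    ∃ w : ℝ → ℝ, (∀ x ∈ S, w x = g x) ∧ (∀ t ∈ Ioo a b, w t = 0 ∨ w t = 1) ∧
      eVariationOn w (Ioo a b) ≤ eVariationOn g S := by
  classical
  let onesToLeft : ℝ → Prop := fun t => ∀ c < t, ∃ s ∈ S, c < s ∧ s < t ∧ g s = 1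
  let w : ℝ → ℝ := fun t => if t ∈ S then g t else if onesToLeft t then 1 else 0
  have hwS : ∀ x ∈ S, w x = g x := fun x hx => if_pos hx
  refine ⟨w, hwS, fun t _ => ?_, eVariationOn_le_of_forall_exists_left fun t ht c hc => ?_⟩
  · by_cases htS : t ∈ S
    · rw [hwS t htS]
      exact hg t htS
    · simp only [w, if_neg htS]
      split_ifs <;> simp
  by_cases htS : t ∈ S
  · exact ⟨t, htS, hc, le_rfl, (hwS t htS).symm⟩
  by_cases hL : onesToLeft t
  · obtain ⟨s, hsS, hcs, hst, hs1⟩ := hL c hc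
    exact ⟨s, hsS, hcs, hst.le, by simp only [w, if_neg htS, if_pos hL, hs1]⟩
  · have hw0 : w t = 0 := by simp only [w, if_neg htS, if_neg hL]
    obtain ⟨c₀, hc₀, hne⟩ : ∃ c₀ < t, ∀ s ∈ S, c₀ < s → s < t → g s ≠ 1 := by
      simpa [onesToLeft] using hL
    obtain ⟨s, hsS, hcs, hst⟩ := exists_mem_Ioo_of_ae_restrict_mem hS ht (max_lt hc hc₀)
    have hs0 : g s = 0 :=
      (hg s hsS).resolve_right (hne s hsS ((le_max_right _ _).trans_lt hcs) hst)
    exact ⟨s, hsS, (le_max_left _ _).trans_lt hcs, hst.le, hs0.trans hw0.symm⟩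

def binaryBV (a b : ℝ) (C p : ℝ≥0∞) : Set (Lp ℝ p (volume.restrict (Ioo a b))) :=
  {u | ∃ v : ℝ → ℝ, (u : ℝ → ℝ) =ᵐ[volume.restrict (Ioo a b)] v ∧
    (∀ t ∈ Ioo a b, v t = 0 ∨ v t = 1) ∧ eVariationOn v (Ioo a b) ≤ C}

theorem isClosed_binaryBV (a b : ℝ) (C p : ℝ≥0∞) [Fact (1 ≤ p)] :
    IsClosed (binaryBV a b C p) := by
  refine IsSeqClosed.isClosed fun f u hf hfu => ?_
  obtain ⟨ns, -, hae⟩ := (tendstoInMeasure_of_tendsto_Lp hfu).exists_seq_tendsto_ae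
  choose v hfv hv01 hvC using hf
  set S := {x ∈ Ioo a b | Tendsto (fun k => v (ns k) x) atTop (𝓝 (u x))}
  have hS : ∀ᵐ x ∂volume.restrict (Ioo a b), x ∈ S := by
    filter_upwards [ae_restrict_mem measurableSet_Ioo, hae, ae_all_iff.2 fun k => hfv (ns k)]
      with x hx hlim hfvx
    exact ⟨hx, hlim.congr hfvx⟩
  have hu01 (x : ℝ) (hx : x ∈ S) : u x = 0 ∨ u x = 1 := by
    have : u x ∈ ({0, 1} : Set ℝ) := (toFinite _).isClosed.mem_of_tendsto hx.2
      (Eventually.of_forall fun k => hv01 (ns k) x hx.1)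
    simpa using this
  have huC : eVariationOn u S ≤ C := eVariationOn_le_of_tendsto (fun x hx => hx.2)
    (Eventually.of_forall fun k => (eVariationOn.mono _ (sep_subset _ _)).trans (hvC (ns k)))
  obtain ⟨w, hwS, hw01, hwC⟩ := exists_binary_extension_eVariationOn_le hS hu01
  exact ⟨w, hS.mono fun x hx => (hwS x hx).symm, hw01, hwC.trans huC⟩

section FiniteMeasure

variable {α E ι : Type*} [MeasurableSpace α] [NormedAddCommGroup E] {μ : Measure α}
  [IsFiniteMeasure μ] {p : ℝ≥0∞} [Fact (1 ≤ p)]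

theorem tendsto_eLpNorm_one_sub_of_tendsto_Lp {l : Filter ι} {f : ι → Lp E p μ}
    {g : Lp E p μ} (hfg : Tendsto f l (𝓝 g)) :
    Tendsto (fun i => eLpNorm (⇑(f i) - ⇑g) 1 μ) l (𝓝 0) := by
  have hp : 1 ≤ p := Fact.out
  have hexp : 0 ≤ 1 / (1 : ℝ≥0∞).toReal - 1 / p.toReal := by
    have : p⁻¹.toReal ≤ 1 := by
      simpa using ENNReal.toReal_mono ENNReal.one_ne_top (ENNReal.inv_le_one.2 hp)
    simpa [ENNReal.toReal_inv] using this
  have hlim := ENNReal.Tendsto.mul_const ((Lp.tendsto_Lp_iff_tendsto_eLpNorm' f g).1 hfg)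
    (Or.inr (ENNReal.rpow_ne_top_of_nonneg hexp (measure_ne_top μ univ)))
  rw [zero_mul] at hlim
  exact tendsto_of_tendsto_of_tendsto_of_le_of_le tendsto_const_nhds hlim (fun _ => zero_le)
    fun _ => eLpNorm_le_eLpNorm_mul_rpow_measure_univ hp
      ((Lp.aestronglyMeasurable _).sub (Lp.aestronglyMeasurable _))

theorem continuous_setIntegral_Lp [NormedSpace ℝ E] (s : Set α) :
    Continuous fun u : Lp E p μ => ∫ x in s, u x ∂μ :=
  continuous_iff_continuousAt.2 fun g =>
    tendsto_setIntegral_of_L1' g (Lp.aestronglyMeasurable g)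
      (Eventually.of_forall fun u => (Lp.memLp u).integrable Fact.out)
      (tendsto_eLpNorm_one_sub_of_tendsto_Lp tendsto_id) s

end FiniteMeasure

theorem stmt_10
    (M : ℕ) (p : ℝ≥0∞) [Fact (1 ≤ p)]
    (K : Set (Fin M → ℝ)) (hK_closed : IsClosed K) :
    IsClosed (DK M p K) := by
  have : IsFiniteMeasure (volume.restrict (Ioo (0 : ℝ) M)) := by
    rw [isFiniteMeasure_restrict]
    exact measure_Ioo_lt_top.ne
  have hproj : Continuous (projK M p) :=
    continuous_pi fun _ => continuous_setIntegral_Lp _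
  exact (isClosed_binaryBV 0 M M p).inter (hK_closed.preimage hproj)
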